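/- arXiv:1905.08658 — 4 statements merged into one kernel-verified Lean document; each statement's English description precedes it below -/
import Mathlib

section
/- Let G = (V, E) be a finite graph and let w ∈ ℝ_{>0}^E. Define z ∈ ℝ_{≥0}^E by z_e = w_e / (Σ_{g ∈ δ(u) ∪ δ(v)} w_g) for each edge e = {u,v}. Then z lies in the convex hull of characteristic vectors of matchings of G. Concretely: there exists a random matching M ⊆ E with Pr[e ∈ M] = z_e for every e ∈ E. -/
/-!
Order the edges by their exponential clocks `D_e`. The resulting random order is the Plackett–Luce
order: among the edges `S` not yet placed, the next one is `a` with probability `w a / w(S)`. The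
matching `M` consists of the edges that come first in their closed neighbourhood `δ(u) ∪ δ(v)`, and
by induction on `S`, the first element of a fixed set `T` in the Plackett–Luce order of `S` is
`e ∈ T ∩ S` with probability `w e / w(T ∩ S)`.
-/

theorem List.eq_of_find?_eq_some {α : Type*} {p q : α → Bool} {l : List α} {x y : α}
    (hx : l.find? p = some x) (hy : l.find? q = some y) (hqx : q x) (hpy : p y) : x = y := by
  induction l with
  | nil => simp at hx
  | cons a l ih =>
    rw [List.find?_cons] at hx hy
    cases hpa : p a <;> cases hqa : q a <;> simp_all

theorem Finset.sum_equivFin_symm {α M : Type*} [AddCommMonoid M] (s : Finset α) (f : α → M) :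
    ∑ i, f (s.equivFin.symm i) = ∑ x ∈ s, f x := by
  rw [← sum_coe_sort s f]
  exact Fintype.sum_equiv s.equivFin.symm _ _ fun _ => rfl

namespace PlackettLuce

open Finset

variable {α : Type*} [DecidableEq α] (w : α → ℝ)

noncomputable def expectAux : ℕ → Finset α → (List α → ℝ) →ₗ[ℝ] ℝ
  | 0, _ => LinearMap.proj []
  | n + 1, S => ∑ a ∈ S, (w a / ∑ g ∈ S, w g) •
      (expectAux n (S.erase a)).comp (LinearMap.funLeft ℝ ℝ (List.cons a))

noncomputable def expect (S : Finset α) : (List α → ℝ) →ₗ[ℝ] ℝ :=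
  expectAux w S.card S

theorem expect_empty (f : List α → ℝ) : expect w ∅ f = f [] := rfl

theorem expect_of_nonempty {S : Finset α} (hS : S.Nonempty) (f : List α → ℝ) :
    expect w S f = ∑ a ∈ S, (w a / ∑ g ∈ S, w g) * expect w (S.erase a) (fun l => f (a :: l)) := by
  obtain ⟨n, hn⟩ := Nat.exists_eq_add_one_of_ne_zero hS.card_pos.ne'
  have hcard : ∀ a ∈ S, (S.erase a).card = n := fun a ha => by
    rw [card_erase_of_mem ha, hn, Nat.add_sub_cancel]
  rw [expect, hn, expectAux, LinearMap.sum_apply]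
  refine sum_congr rfl fun a ha => ?_
  rw [expect, hcard a ha]
  rfl

theorem expect_nonneg (hw : ∀ a, 0 ≤ w a) (S : Finset α) {f : List α → ℝ} (hf : ∀ l, 0 ≤ f l) :
    0 ≤ expect w S f := by
  induction S using Finset.strongInduction generalizing f with
  | H S ih =>
    rcases S.eq_empty_or_nonempty with rfl | hS
    · exact hf []
    rw [expect_of_nonempty w hS]
    exact sum_nonneg fun a ha => mul_nonneg (div_nonneg (hw a) (sum_nonneg fun g _ => hw g))
      (ih _ (erase_ssubset ha) fun l => hf (a :: l))

theorem expect_const (hw : ∀ a, 0 < w a) (S : Finset α) (c : ℝ) :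
    expect w S (fun _ => c) = c := by
  induction S using Finset.strongInduction with
  | H S ih =>
    rcases S.eq_empty_or_nonempty with rfl | hS
    · rfl
    have hW : (∑ g ∈ S, w g) ≠ 0 := (sum_pos (fun g _ => hw g) hS).ne'
    rw [expect_of_nonempty w hS, sum_congr rfl fun a ha => by rw [ih _ (erase_ssubset ha)],
      ← sum_mul, ← sum_div, div_self hW, one_mul]

theorem sum_expect_indicator_mul {β : Type*} [Fintype β] [DecidableEq β] (S : Finset α)
    (g : List α → β) (h : β → ℝ) :
    ∑ b, expect w S (fun l => if g l = b then 1 else 0) * h b = expect w S (fun l => h (g l)) := by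
  simp_rw [mul_comm _ (h _), ← smul_eq_mul, ← map_smul, ← map_sum]
  congr 1
  ext l
  simp [Finset.sum_apply]

theorem expect_find?_eq_some (hw : ∀ a, 0 < w a) (S T : Finset α) (e : α) :
    expect w S (fun l => if l.find? (· ∈ T) = some e then 1 else 0) =
      if e ∈ T ∩ S then w e / ∑ g ∈ T ∩ S, w g else 0 := by
  induction S using Finset.strongInduction with
  | H S ih =>
    rcases S.eq_empty_or_nonempty with rfl | hS
    · simp [expect_empty]
    set c := if e ∈ T ∩ S then w e / ∑ g ∈ T ∩ S, w g else 0
    have hstep : ∀ a ∈ S,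
        expect w (S.erase a) (fun l => if (a :: l).find? (· ∈ T) = some e then 1 else 0) =
          if a ∈ T then (if a = e then 1 else 0) else c := by
      intro a ha
      by_cases haT : a ∈ T
      · simp only [List.find?_cons, haT, decide_true, Option.some.injEq, if_true]
        exact expect_const w hw _ _
      · have hTS : T ∩ S.erase a = T ∩ S := by
          rw [inter_erase, erase_eq_of_notMem fun h => haT (mem_inter.1 h).1]
        simp only [List.find?_cons, haT, decide_false, if_false]
        rw [ih _ (erase_ssubset ha), hTS]
    rw [expect_of_nonempty w hS, sum_congr rfl fun a ha => by rw [hstep a ha]]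
    simp only [mul_ite, mul_one, mul_zero, sum_ite, filter_mem_eq_inter, filter_notMem_eq_sdiff,
      sum_const_zero, add_zero, filter_eq', ← sum_mul, ← sum_div]
    rw [← sdiff_inter_self_left S T, sum_sdiff_eq_sub inter_subset_left, inter_comm S T]
    by_cases he : e ∈ T ∩ S
    · have hW : 0 < ∑ g ∈ S, w g := sum_pos (fun g _ => hw g) hS
      have hWT : 0 < ∑ g ∈ T ∩ S, w g := sum_pos (fun g _ => hw g) ⟨e, he⟩
      simp only [c, if_pos he, sum_singleton]
      field_simp
      ring
    · simp [c, he]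

end PlackettLuce

section Matching

open Finset

variable {V E : Type*} [Fintype E] [DecidableEq V] (fst snd : E → V)

def edgeNbhd (e : E) : Finset E :=
  univ.filter fun g => fst g = fst e ∨ snd g = fst e ∨ fst g = snd e ∨ snd g = snd e

theorem self_mem_edgeNbhd (e : E) : e ∈ edgeNbhd fst snd e := by
  simp [edgeNbhd]

theorem mem_edgeNbhd_comm {e f : E} : f ∈ edgeNbhd fst snd e ↔ e ∈ edgeNbhd fst snd f := by
  simp only [edgeNbhd, mem_filter, mem_univ, true_and]
  tauto

def IsMatching (M : Finset E) : Prop :=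
  ∀ e ∈ M, ∀ f ∈ M, e ≠ f → fst e ≠ fst f ∧ fst e ≠ snd f ∧ snd e ≠ fst f ∧ snd e ≠ snd f

variable [DecidableEq E]

def localMinEdges (l : List E) : Finset E :=
  univ.filter fun e => l.find? (· ∈ edgeNbhd fst snd e) = some e

theorem isMatching_localMinEdges (l : List E) : IsMatching fst snd (localMinEdges fst snd l) := by
  intro e he f hf hef
  have hfe : f ∉ edgeNbhd fst snd e := fun hfe =>
    hef (List.eq_of_find?_eq_some (mem_filter.1 he).2 (mem_filter.1 hf).2
      (by simpa using (mem_edgeNbhd_comm fst snd).1 hfe) (by simpa using hfe))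
  simp only [edgeNbhd, mem_filter, mem_univ, true_and, not_or] at hfe
  exact ⟨Ne.symm hfe.1, Ne.symm hfe.2.1, Ne.symm hfe.2.2.1, Ne.symm hfe.2.2.2⟩

theorem expect_mem_localMinEdges {w : E → ℝ} (hw : ∀ e, 0 < w e) (e : E) :
    PlackettLuce.expect w univ (fun l => if e ∈ localMinEdges fst snd l then 1 else 0) =
      w e / ∑ g ∈ edgeNbhd fst snd e, w g := by
  simp only [localMinEdges, mem_filter, mem_univ, true_and]
  rw [PlackettLuce.expect_find?_eq_some w hw, inter_univ, if_pos (self_mem_edgeNbhd fst snd e)]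

end Matching

theorem marginals_in_matching_polytope_general
    {V E : Type*} [Fintype E] [DecidableEq V] [DecidableEq E]
    (fst snd : E → V)
    (w : E → ℝ) (hw : ∀ e, 0 < w e)
    (z : E → ℝ)
    (hz : ∀ e : E, z e = w e /
      (∑ g ∈ Finset.univ.filter
          (fun g => fst g = fst e ∨ snd g = fst e ∨ fst g = snd e ∨ snd g = snd e), w g)) :
    ∃ (ι : Type) (s : Finset ι) (p : ι → ℝ) (M : ι → Finset E),
      (∀ i ∈ s, 0 ≤ p i) ∧ (∑ i ∈ s, p i = 1) ∧
      (∀ i ∈ s, ∀ e ∈ M i, ∀ f ∈ M i, e ≠ f →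
        fst e ≠ fst f ∧ fst e ≠ snd f ∧ snd e ≠ fst f ∧ snd e ≠ snd f) ∧
      (∀ e : E, (∑ i ∈ s, p i * (if e ∈ M i then 1 else 0)) = z e) := by
  let μ (m : Finset E) : ℝ :=
    PlackettLuce.expect w Finset.univ (fun l => if localMinEdges fst snd l = m then 1 else 0)
  have hmatching (m : Finset E) (hm : μ m ≠ 0) : IsMatching fst snd m := by
    by_contra hnot
    have hne (l : List E) : localMinEdges fst snd l ≠ m :=
      fun h => hnot (h ▸ isMatching_localMinEdges fst snd l)
    exact hm (by simpa only [μ, hne, if_false] using PlackettLuce.expect_const w hw _ 0)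
  let s := Finset.univ.filter (fun m => μ m ≠ 0)
  have hsum (h : Finset E → ℝ) : ∑ i, μ (s.equivFin.symm i) * h (s.equivFin.symm i) =
      PlackettLuce.expect w Finset.univ (fun l => h (localMinEdges fst snd l)) := by
    rw [Finset.sum_equivFin_symm s (fun m => μ m * h m),
      Finset.sum_filter_of_ne fun m _ hm => left_ne_zero_of_mul hm,
      PlackettLuce.sum_expect_indicator_mul]
  refine ⟨Fin s.card, Finset.univ, fun i => μ (s.equivFin.symm i), fun i => s.equivFin.symm i,
    fun i _ => PlackettLuce.expect_nonneg w (fun e => (hw e).le) _ fun l => by positivity,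
    ?_, fun i _ => hmatching _ (Finset.mem_filter.1 (s.equivFin.symm i).2).2, fun e => ?_⟩
  · simpa [PlackettLuce.expect_const w hw] using hsum fun _ => 1
  · rw [hsum fun m => if e ∈ m then 1 else 0, expect_mem_localMinEdges fst snd hw, hz, edgeNbhd]

/-- Let `G = (V,E)` be a finite graph (edges given by endpoint maps `fst`, `snd`, no loops)
and `w ∈ ℝ_{>0}^E`.  Define `z_e = w_e / (Σ_{g ∈ δ(u) ∪ δ(v)} w_g)` for each edge
`e = {u,v}`.  Then `z` lies in the convex hull of characteristic vectors of matchings of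
`G`: there is a finitely supported probability distribution over matchings whose
marginal at each edge `e` is `z_e`. -/
theorem marginals_in_matching_polytope
    {V E : Type*} [Fintype V] [Fintype E] [DecidableEq V] [DecidableEq E]
    (fst snd : E → V) (hloop : ∀ e, fst e ≠ snd e)
    (w : E → ℝ) (hw : ∀ e, 0 < w e)
    (z : E → ℝ)
    (hz : ∀ e : E, z e = w e /
      (∑ g ∈ Finset.univ.filter
          (fun g => fst g = fst e ∨ snd g = fst e ∨ fst g = snd e ∨ snd g = snd e), w g)) :
    ∃ (ι : Type) (s : Finset ι) (p : ι → ℝ) (M : ι → Finset E),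
      (∀ i ∈ s, 0 ≤ p i) ∧ (∑ i ∈ s, p i = 1) ∧
      (∀ i ∈ s, ∀ e ∈ M i, ∀ f ∈ M i, e ≠ f →
        fst e ≠ fst f ∧ fst e ≠ snd f ∧ snd e ≠ fst f ∧ snd e ≠ snd f) ∧
      (∀ e : E, (∑ i ∈ s, p i * (if e ∈ M i then 1 else 0)) = z e) :=
  marginals_in_matching_polytope_general fst snd w hw z hz
end

section
/- Let V be a finite set and let a, b : V → ℝ_{≥0} be weight functions with Σ_{w∈V} a(w) ≥ 0.99 and Σ_{w∈V} b(w) ≥ 0.99, and suppose a(w) + b(w) ≤ 1 for every w ∈ V. Then there exists a partition V = V_a ⊎ V_b such that Σ_{w∈V_a} a(w) ≥ 0.33 and Σ_{w∈V_b} b(w) ≥ 0.33. -/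
/-!
A single vertex with `a w ≥ 0.33` and `b w ≤ 0.66` (or symmetrically) is already a valid `V_a`
(or `V_b`); otherwise `a + b ≤ 1` forces every `a w < 0.33`. Then, as in fractional knapsack, take
vertices in increasing order of `b w / a w` until their `a`-load first reaches `0.33`, which happens
below `0.66`. If `r` is the last ratio taken, the prefix carries `b`-load at most `r` times its
`a`-load and the rest at least `r` times, so the rest has `b`-load at least
`min (Σ b - 0.66) (Σ a - 0.66) ≥ 0.33`, according as `r ≤ 1` or `r ≥ 1`.
-/

open Finset

theorem Finset.exists_key_prefix_of_le_sum {α β : Type*} [DecidableEq α] [LinearOrder β]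
    (key : α → β) (a : α → ℝ) {c : ℝ} (hc : 0 < c) (S : Finset α)
    (hS : c ≤ ∑ w ∈ S, a w) :
    ∃ P ⊆ S, ∃ ℓ ∈ P, c ≤ ∑ w ∈ P, a w ∧ ∑ w ∈ P.erase ℓ, a w < c ∧
      (∀ w ∈ P, key w ≤ key ℓ) ∧ ∀ u ∈ S \ P, key ℓ ≤ key u := by
  induction S using Finset.induction_on_max_value key with
  | empty => simp only [sum_empty] at hS; linarith
  | insert m s hms hmax ih =>
    by_cases hs : c ≤ ∑ w ∈ s, a w
    · obtain ⟨P, hPs, ℓ, hℓP, hsum, herase, hle, hge⟩ := ih hs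
      refine ⟨P, hPs.trans (subset_insert m s), ℓ, hℓP, hsum, herase, hle, ?_⟩
      intro u hu
      rcases mem_insert.1 (mem_sdiff.1 hu).1 with rfl | hus
      · exact hmax ℓ (hPs hℓP)
      · exact hge u (mem_sdiff.2 ⟨hus, (mem_sdiff.1 hu).2⟩)
    · refine ⟨insert m s, subset_rfl, m, mem_insert_self m s, hS, ?_, ?_, by simp⟩
      · rwa [erase_insert hms, ← not_le]
      · simpa using hmax

section RatioThreshold

variable {V : Type*} [Fintype V] [DecidableEq V] {a b : V → ℝ}

theorem exists_ratio_threshold_of_le_sum (ha : ∀ w, 0 ≤ a w) (hb : ∀ w, 0 ≤ b w) {c : ℝ}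
    (hc : 0 < c) (hsa : c ≤ ∑ w, a w) :
    ∃ P : Finset V, ∃ r : ℝ, c ≤ ∑ w ∈ P, a w ∧ (∃ ℓ ∈ P, ∑ w ∈ P, a w < c + a ℓ) ∧
      (∀ w ∈ P, b w ≤ r * a w) ∧ ∀ w ∉ P, r * a w ≤ b w := by
  set S := univ.filter (fun w => 0 < a w)
  have hSsum : ∑ w ∈ S, a w = ∑ w, a w :=
    sum_filter_of_ne fun w _ hw => (ha w).lt_of_ne' hw
  obtain ⟨P, hPS, ℓ, hℓP, hsum, herase, hle, hge⟩ :=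
    exists_key_prefix_of_le_sum (fun w => b w / a w) a hc S (hSsum ▸ hsa)
  have hpos : ∀ w ∈ P, 0 < a w := fun w hw => (mem_filter.1 (hPS hw)).2
  refine ⟨P, b ℓ / a ℓ, hsum, ⟨ℓ, hℓP, ?_⟩, fun w hw => ?_, fun w hw => ?_⟩
  · linarith [sum_erase_add P a hℓP]
  · exact (div_le_iff₀ (hpos w hw)).1 (hle w hw)
  · by_cases hw0 : 0 < a w
    · exact (le_div_iff₀ hw0).1 (hge w (mem_sdiff.2 ⟨mem_filter.2 ⟨mem_univ w, hw0⟩, hw⟩))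
    · rw [le_antisymm (not_lt.1 hw0) (ha w), mul_zero]
      exact hb w

theorem min_le_sum_compl_of_ratio_threshold (ha : ∀ w, 0 ≤ a w) {P : Finset V} {r : ℝ}
    (hP : ∀ w ∈ P, b w ≤ r * a w) (hPc : ∀ w ∉ P, r * a w ≤ b w) :
    min (∑ w, b w - ∑ w ∈ P, a w) (∑ w, a w - ∑ w ∈ P, a w) ≤ ∑ w ∈ Pᶜ, b w := by
  have hin : ∑ w ∈ P, b w ≤ r * ∑ w ∈ P, a w := by
    rw [mul_sum]; exact sum_le_sum hP
  have hout : r * ∑ w ∈ Pᶜ, a w ≤ ∑ w ∈ Pᶜ, b w := by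
    rw [mul_sum]; exact sum_le_sum fun w hw => hPc w (mem_compl.1 hw)
  have hsplit_a := sum_add_sum_compl P a
  have hsplit_b := sum_add_sum_compl P b
  have hP0 : 0 ≤ ∑ w ∈ P, a w := sum_nonneg fun w _ => ha w
  have hPc0 : 0 ≤ ∑ w ∈ Pᶜ, a w := sum_nonneg fun w _ => ha w
  rcases le_total r 1 with hr | hr
  · exact min_le_of_left_le (by nlinarith)
  · exact min_le_of_right_le (by nlinarith)

theorem exists_partition_of_forall_lt (ha : ∀ w, 0 ≤ a w) (hb : ∀ w, 0 ≤ b w) {c : ℝ}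
    (hc : 0 < c) (hsmall : ∀ w, a w < c) (hsa : 3 * c ≤ ∑ w, a w) (hsb : 3 * c ≤ ∑ w, b w) :
    ∃ Va : Finset V, c ≤ ∑ w ∈ Va, a w ∧ c ≤ ∑ w ∈ Vaᶜ, b w := by
  obtain ⟨P, r, hPa, ⟨ℓ, -, hPa'⟩, hP, hPc⟩ :=
    exists_ratio_threshold_of_le_sum ha hb hc (by linarith : c ≤ ∑ w, a w)
  refine ⟨P, hPa, ?_⟩
  have hPa_lt : ∑ w ∈ P, a w < 2 * c := by linarith [hsmall ℓ]
  refine le_trans (le_min ?_ ?_) (min_le_sum_compl_of_ratio_threshold ha hP hPc) <;> linarith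

end RatioThreshold

/-- Partition step: if `a, b : V → ℝ_{≥0}` with `Σ a ≥ 0.99`, `Σ b ≥ 0.99` and
`a(w) + b(w) ≤ 1` for every `w`, then `V` can be partitioned into `V_a ⊎ V_b` with
`Σ_{w∈V_a} a(w) ≥ 0.33` and `Σ_{w∈V_b} b(w) ≥ 0.33`. -/
theorem exists_partition_loads
    {V : Type*} [Fintype V] [DecidableEq V]
    (a b : V → ℝ) (ha : ∀ w, 0 ≤ a w) (hb : ∀ w, 0 ≤ b w)
    (hsa : ∑ w, a w ≥ 0.99) (hsb : ∑ w, b w ≥ 0.99)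
    (hab : ∀ w, a w + b w ≤ 1) :
    ∃ Va : Finset V, (∑ w ∈ Va, a w ≥ 0.33) ∧ (∑ w ∈ Vaᶜ, b w ≥ 0.33) := by
  by_cases hbig_a : ∃ w, 0.33 ≤ a w ∧ b w ≤ 0.66
  · obtain ⟨w, haw, hbw⟩ := hbig_a
    refine ⟨{w}, by simpa using haw, ?_⟩
    linarith [Fintype.sum_eq_add_sum_compl w b]
  by_cases hbig_b : ∃ w, 0.33 ≤ b w ∧ a w ≤ 0.66
  · obtain ⟨w, hbw, haw⟩ := hbig_b
    refine ⟨{w}ᶜ, by linarith [Fintype.sum_eq_add_sum_compl w a], by simpa using hbw⟩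
  push Not at hbig_a hbig_b
  -- A vertex with `a w ≥ 0.33` would have `b w > 0.66`, hence `a w > 0.66`, so `a w + b w > 1`.
  have hsmall : ∀ w, a w < 0.33 := fun w => by
    by_contra! h
    have hbw := hbig_a w h
    linarith [hab w, hbig_b w (by linarith)]
  exact exists_partition_of_forall_lt ha hb (by norm_num) hsmall (by linarith) (by linarith)
end

section
/- Let P₁ and P₂ be two independent Poisson random variables, each with parameter 1. Then E[1/(1 + max(P₁, P₂))] ≥ 0.4762. -/
open Real

noncomputable def gfun (j k : ℕ) : ℝ :=
  (1 / (1 + (max j k : ℝ))) *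
    (Real.exp (-2) / ((Nat.factorial j : ℝ) * (Nat.factorial k : ℝ)))

lemma gfun_nonneg (j k : ℕ) : 0 ≤ gfun j k := by
  unfold gfun
  positivity

lemma gfun_le (j k : ℕ) :
    gfun j k ≤ (Real.exp (-2) / (Nat.factorial j : ℝ)) * (1 / (Nat.factorial k : ℝ)) := by
  unfold gfun
  have h1 : (1 : ℝ) / (1 + (max j k : ℝ)) ≤ 1 := by
    rw [div_le_one (by positivity)]
    have : (0:ℝ) ≤ (max j k : ℝ) := le_sup_of_le_left (Nat.cast_nonneg j)
    linarith
  have h2 : (0:ℝ) ≤ Real.exp (-2) / ((Nat.factorial j : ℝ) * (Nat.factorial k : ℝ)) := by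
    positivity
  calc (1 / (1 + (max j k : ℝ))) *
        (Real.exp (-2) / ((Nat.factorial j : ℝ) * (Nat.factorial k : ℝ)))
      ≤ 1 * (Real.exp (-2) / ((Nat.factorial j : ℝ) * (Nat.factorial k : ℝ))) := by
        exact mul_le_mul_of_nonneg_right h1 h2
    _ = (Real.exp (-2) / (Nat.factorial j : ℝ)) * (1 / (Nat.factorial k : ℝ)) := by
        rw [one_mul]; field_simp

lemma summable_inv_factorial : Summable (fun k : ℕ => (1 : ℝ) / (Nat.factorial k : ℝ)) := by
  have := Real.summable_pow_div_factorial 1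
  simpa using this

lemma summable_gfun (j : ℕ) : Summable (fun k => gfun j k) := by
  apply Summable.of_nonneg_of_le (fun k => gfun_nonneg j k) (fun k => gfun_le j k)
  exact (summable_inv_factorial.mul_left _)

lemma tsum_inv_factorial_le : (∑' k : ℕ, (1 : ℝ) / (Nat.factorial k : ℝ)) ≤ 3 := by
  have h : (∑' k : ℕ, (1 : ℝ) / (Nat.factorial k : ℝ)) = Real.exp 1 := by
    rw [Real.exp_eq_exp_ℝ, NormedSpace.exp_eq_tsum_div]
    simp [one_div]
  rw [h]
  have := Real.exp_one_lt_d9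
  linarith

lemma Ffun_le (j : ℕ) :
    (∑' k, gfun j k) ≤ (Real.exp (-2) / (Nat.factorial j : ℝ)) * 3 := by
  calc (∑' k, gfun j k)
      ≤ ∑' k : ℕ, (Real.exp (-2) / (Nat.factorial j : ℝ)) * (1 / (Nat.factorial k : ℝ)) :=
        Summable.tsum_le_tsum (fun k => gfun_le j k) (summable_gfun j)
          (summable_inv_factorial.mul_left _)
    _ = (Real.exp (-2) / (Nat.factorial j : ℝ)) * ∑' k : ℕ, (1 / (Nat.factorial k : ℝ)) := by
        rw [tsum_mul_left]
    _ ≤ (Real.exp (-2) / (Nat.factorial j : ℝ)) * 3 := by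
        apply mul_le_mul_of_nonneg_left tsum_inv_factorial_le (by positivity)

lemma summable_Ffun : Summable (fun j => ∑' k, gfun j k) := by
  apply Summable.of_nonneg_of_le
    (fun j => tsum_nonneg (fun k => gfun_nonneg j k)) Ffun_le
  have : Summable (fun j : ℕ => Real.exp (-2) / (Nat.factorial j : ℝ)) := by
    simpa [div_eq_mul_inv, one_div] using summable_inv_factorial.mul_left (Real.exp (-2))
  exact this.mul_right 3

lemma exp_neg_two_lb : Real.exp (-2) ≥ 0.13533528 := by
  have h1 : Real.exp 1 < 2.7182818286 := Real.exp_one_lt_d9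
  have h2 : Real.exp 2 = Real.exp 1 * Real.exp 1 := by
    rw [← Real.exp_add]; norm_num
  have h3 : Real.exp 2 < 7.3890561 := by
    nlinarith [Real.exp_pos 1]
  have h4 : Real.exp (-2) = (Real.exp 2)⁻¹ := by
    rw [← Real.exp_neg]
  rw [h4]
  have h5 := Real.exp_pos 2
  have h6 := mul_inv_cancel₀ (ne_of_gt h5)
  nlinarith

/-- For two independent Poisson random variables `P₁, P₂` with parameter `1`,
`E[1/(1 + max(P₁,P₂))] ≥ 0.4762`, where the expectation equals
`Σ_{j,k≥0} (1/(1+max(j,k))) · e^{-2}/(j! k!)`. -/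
theorem poisson_max_expectation_ge :
    (∑' j : ℕ, ∑' k : ℕ,
        (1 / (1 + (max j k : ℝ))) *
          (Real.exp (-2) / ((Nat.factorial j : ℝ) * (Nat.factorial k : ℝ)))) ≥ 0.4762 := by
  have key : (∑' j : ℕ, ∑' k : ℕ, gfun j k) ≥ 0.4762 := by
    have step1 : (∑ j ∈ Finset.range 8, ∑' k, gfun j k) ≤ ∑' j, ∑' k, gfun j k :=
      Summable.sum_le_tsum _ (fun j _ => tsum_nonneg (fun k => gfun_nonneg j k)) summable_Ffun
    have step2 : ∀ j, (∑ k ∈ Finset.range 8, gfun j k) ≤ ∑' k, gfun j k := fun j =>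
      Summable.sum_le_tsum _ (fun k _ => gfun_nonneg j k) (summable_gfun j)
    have step3 : (∑ j ∈ Finset.range 8, ∑ k ∈ Finset.range 8, gfun j k) ≤
        ∑ j ∈ Finset.range 8, ∑' k, gfun j k :=
      Finset.sum_le_sum (fun j _ => step2 j)
    have step4 : (∑ j ∈ Finset.range 8, ∑ k ∈ Finset.range 8, gfun j k) ≥ 0.4762 := by
      have hE := exp_neg_two_lb
      have hpos : (0:ℝ) < Real.exp (-2) := Real.exp_pos _
      simp only [gfun, Finset.sum_range_succ, Finset.sum_range_zero]
      norm_num [Nat.factorial]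
      nlinarith
    linarith
  exact key
end

section
/- Let b ∈ [0,1], let x_e ∈ [0, b], and let P₀ ~ Pois(x_e), P₁ ~ Pois(b - x_e), P₂ ~ Pois(b - x_e) be mutually independent Poisson random variables. Then E[ P₀ / (P₀ + max(P₁, P₂)) ] ≥ x_e · E[ 1 / (1 + max(Q₁, Q₂)) ], where Q₁, Q₂ are independent Pois(b) random variables and the ratio is interpreted as 0 when P₀ = 0. -/
/-- The probability that a Poisson random variable with parameter `r ≥ 0` equals `n`. -/
noncomputable def poissonProb (r : ℝ) (n : ℕ) : ℝ := Real.exp (-r) * r ^ n / (Nat.factorial n)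

/-!
Put `c = b - xₑ`. For `N ~ Pois(xₑ)` the size-biasing identity `E[N f(N)] = xₑ E[f(N + 1)]`
turns the left side into `xₑ · E[1/(1 + X + max(P₁, P₂))]` with `X ~ Pois(xₑ)`. On the right,
`Pois(b) = Pois(xₑ) ∗ Pois(c)` lets us write `Q₁ = Y + P₁`, `Q₂ = Z + P₂` with `Y, Z ~ Pois(xₑ)`.
As `Y` and `Z` are i.i.d., for fixed `P₁, P₂` the variable `max(Y + P₁, Z + P₂)` stochastically
dominates `X + max(P₁, P₂)`, and `m ↦ 1/(1 + m)` is decreasing. The computation is carried out with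
lower Lebesgue integrals against `poissonMeasure`, so that Tonelli needs no integrability.
-/

open MeasureTheory ProbabilityTheory
open scoped ENNReal NNReal

lemma poissonProb_nonneg {r : ℝ} (hr : 0 ≤ r) (n : ℕ) : 0 ≤ poissonProb r n := by
  unfold poissonProb; positivity

lemma succ_mul_poissonProb_succ (r : ℝ) (n : ℕ) :
    (n + 1 : ℕ) * poissonProb r (n + 1) = r * poissonProb r n := by
  simp only [poissonProb, Nat.factorial_succ, Nat.cast_mul, pow_succ]
  field_simp

section Tonelli

variable {α β γ : Type*} [MeasurableSpace α] [MeasurableSpace β] [MeasurableSpace γ]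
  [Countable α] [Countable β] [Countable γ]
  [MeasurableSingletonClass α] [MeasurableSingletonClass β] [MeasurableSingletonClass γ]
  {μ : Measure α} {ν : Measure β} {ρ : Measure γ} [SFinite μ] [SFinite ν] [SFinite ρ]

lemma lintegral_lintegral_lintegral_rotate (f : α → β → γ → ℝ≥0∞) :
    ∫⁻ a, ∫⁻ b, ∫⁻ c, f a b c ∂ρ ∂ν ∂μ = ∫⁻ c, ∫⁻ a, ∫⁻ b, f a b c ∂ν ∂μ ∂ρ :=
  (lintegral_congr fun _ => lintegral_lintegral_swap Measurable.of_discrete.aemeasurable).trans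
    (lintegral_lintegral_swap Measurable.of_discrete.aemeasurable)

end Tonelli

lemma lintegral_lintegral_max_add_le {μ : Measure ℕ} [IsProbabilityMeasure μ] {g : ℕ → ℝ≥0∞}
    (hg : Antitone g) (p q : ℕ) :
    ∫⁻ y, ∫⁻ z, g (max (y + p) (z + q)) ∂μ ∂μ ≤ ∫⁻ y, g (y + max p q) ∂μ := by
  wlog hqp : q ≤ p generalizing p q
  · rw [lintegral_lintegral_swap Measurable.of_discrete.aemeasurable, max_comm p]
    simpa only [max_comm] using this q p (le_of_not_ge hqp)
  rw [max_eq_left hqp]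
  exact lintegral_mono fun y => lintegral_le_const (.of_forall fun z => hg (le_max_left _ _))


lemma lintegral_poissonMeasure_eq_tsum (r : ℝ≥0) (f : ℕ → ℝ≥0∞) :
    ∫⁻ n, f n ∂poissonMeasure r = ∑' n, ENNReal.ofReal (poissonProb r n) * f n := by
  simp only [lintegral_countable', poissonMeasure_singleton, mul_comm (f _)]
  rfl

lemma toReal_lintegral_poissonMeasure (r : ℝ≥0) {f : ℕ → ℝ≥0∞} (hf : ∀ n, f n ≤ 1) :
    (∫⁻ n, f n ∂poissonMeasure r).toReal = ∑' n, poissonProb r n * (f n).toReal := by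
  have hf_ne_top n : f n ≠ ∞ := ne_top_of_le_ne_top ENNReal.one_ne_top (hf n)
  rw [lintegral_poissonMeasure_eq_tsum,
    ENNReal.tsum_toReal_eq fun n => ENNReal.mul_ne_top ENNReal.ofReal_ne_top (hf_ne_top n)]
  exact tsum_congr fun n => by
    rw [ENNReal.toReal_mul, ENNReal.toReal_ofReal (poissonProb_nonneg r.coe_nonneg n)]

lemma toReal_lintegral_lintegral_poissonMeasure (r s : ℝ≥0) {w : ℕ → ℕ → ℝ}
    (hw₀ : ∀ j k, 0 ≤ w j k) (hw₁ : ∀ j k, w j k ≤ 1) :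
    (∫⁻ j, ∫⁻ k, ENNReal.ofReal (w j k) ∂poissonMeasure s ∂poissonMeasure r).toReal =
      ∑' j, ∑' k, w j k * (poissonProb r j * poissonProb s k) := by
  have hw j k : ENNReal.ofReal (w j k) ≤ 1 := ENNReal.ofReal_le_one.2 (hw₁ j k)
  rw [toReal_lintegral_poissonMeasure _ fun j => lintegral_le_const (.of_forall (hw j))]
  refine tsum_congr fun j => ?_
  rw [toReal_lintegral_poissonMeasure _ (hw j), ← tsum_mul_left]
  refine tsum_congr fun k => ?_
  rw [ENNReal.toReal_ofReal (hw₀ j k)]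
  ring

lemma toReal_lintegral_lintegral_lintegral_poissonMeasure (r s t : ℝ≥0) {w : ℕ → ℕ → ℕ → ℝ}
    (hw₀ : ∀ n j k, 0 ≤ w n j k) (hw₁ : ∀ n j k, w n j k ≤ 1) :
    (∫⁻ n, ∫⁻ j, ∫⁻ k, ENNReal.ofReal (w n j k)
        ∂poissonMeasure t ∂poissonMeasure s ∂poissonMeasure r).toReal =
      ∑' n, ∑' j, ∑' k, w n j k * (poissonProb r n * poissonProb s j * poissonProb t k) := by
  have hw n j : ∫⁻ k, ENNReal.ofReal (w n j k) ∂poissonMeasure t ≤ 1 :=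
    lintegral_le_const (.of_forall fun k => ENNReal.ofReal_le_one.2 (hw₁ n j k))
  rw [toReal_lintegral_poissonMeasure _ fun n => lintegral_le_const (.of_forall (hw n))]
  refine tsum_congr fun n => ?_
  rw [toReal_lintegral_lintegral_poissonMeasure s t (hw₀ n) (hw₁ n), ← tsum_mul_left]
  refine tsum_congr fun j => ?_
  rw [← tsum_mul_left]
  exact tsum_congr fun k => by ring

lemma lintegral_poissonMeasure_natCast_mul (r : ℝ≥0) (f : ℕ → ℝ≥0∞) :
    ∫⁻ n, n * f n ∂poissonMeasure r = r * ∫⁻ n, f (n + 1) ∂poissonMeasure r := by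
  simp only [lintegral_poissonMeasure_eq_tsum, ← ENNReal.tsum_mul_left]
  rw [tsum_eq_zero_add' ENNReal.summable]
  simp only [Nat.cast_zero, zero_mul, mul_zero, zero_add]
  refine tsum_congr fun n => ?_
  have h := congrArg ENNReal.ofReal (succ_mul_poissonProb_succ r n)
  rw [ENNReal.ofReal_mul (Nat.cast_nonneg _), ENNReal.ofReal_mul r.coe_nonneg,
    ENNReal.ofReal_natCast, ENNReal.ofReal_coe_nnreal] at h
  rw [← mul_assoc, mul_comm (ENNReal.ofReal _), h, mul_assoc]

lemma lintegral_div_add_poissonMeasure (x : ℝ≥0) (m : ℕ) :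
    ∫⁻ n, ENNReal.ofReal (n / (n + m)) ∂poissonMeasure x =
      x * ∫⁻ y, ENNReal.ofReal (1 / (1 + (y + m : ℕ))) ∂poissonMeasure x := by
  have h (n : ℕ) : ENNReal.ofReal (n / (n + m)) = n * ENNReal.ofReal (1 / (n + m)) := by
    rw [← ENNReal.ofReal_natCast, ← ENNReal.ofReal_mul (Nat.cast_nonneg _), mul_one_div]
  simp_rw [h, lintegral_poissonMeasure_natCast_mul]
  push_cast
  simp_rw [add_right_comm _ (1 : ℝ), add_comm _ (1 : ℝ)]

lemma lintegral_poissonMeasure_add (r₁ r₂ : ℝ≥0) (f : ℕ → ℝ≥0∞) :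
    ∫⁻ n, f n ∂poissonMeasure (r₁ + r₂) =
      ∫⁻ y, ∫⁻ z, f (y + z) ∂poissonMeasure r₂ ∂poissonMeasure r₁ := by
  rw [← poissonMeasure_conv_poissonMeasure, Measure.lintegral_conv .of_discrete]

lemma lintegral_max_poissonMeasure_add_le (x c : ℝ≥0) {g : ℕ → ℝ≥0∞} (hg : Antitone g) :
    ∫⁻ j, ∫⁻ k, g (max j k) ∂poissonMeasure (x + c) ∂poissonMeasure (x + c) ≤
      ∫⁻ p, ∫⁻ q, ∫⁻ y, g (y + max p q) ∂poissonMeasure x ∂poissonMeasure c ∂poissonMeasure c := by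
  simp_rw [lintegral_poissonMeasure_add x c]
  calc _ = ∫⁻ p, ∫⁻ q, ∫⁻ y, ∫⁻ z, g (max (y + p) (z + q))
          ∂poissonMeasure x ∂poissonMeasure x ∂poissonMeasure c ∂poissonMeasure c := by
        rw [lintegral_lintegral_swap Measurable.of_discrete.aemeasurable]
        exact lintegral_congr fun p => lintegral_lintegral_lintegral_rotate _
    _ ≤ _ := lintegral_mono fun p => lintegral_mono fun q => lintegral_lintegral_max_add_le hg p q

lemma mul_lintegral_one_div_one_add_max_le (x c : ℝ≥0) :
    x * ∫⁻ j, ∫⁻ k, ENNReal.ofReal (1 / (1 + (max j k : ℕ)))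
        ∂poissonMeasure (x + c) ∂poissonMeasure (x + c) ≤
      ∫⁻ n, ∫⁻ j, ∫⁻ k, ENNReal.ofReal (n / (n + (max j k : ℕ)))
        ∂poissonMeasure c ∂poissonMeasure c ∂poissonMeasure x := by
  have hg : Antitone fun m : ℕ => ENNReal.ofReal (1 / (1 + m)) := fun m m' h =>
    ENNReal.ofReal_le_ofReal (one_div_le_one_div_of_le (by positivity) (by gcongr))
  calc _ ≤ x * ∫⁻ p, ∫⁻ q, ∫⁻ y, ENNReal.ofReal (1 / (1 + (y + max p q : ℕ)))
        ∂poissonMeasure x ∂poissonMeasure c ∂poissonMeasure c :=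
        mul_le_mul_right (lintegral_max_poissonMeasure_add_le x c hg) _
    _ = ∫⁻ p, ∫⁻ q, ∫⁻ n, ENNReal.ofReal (n / (n + (max p q : ℕ)))
        ∂poissonMeasure x ∂poissonMeasure c ∂poissonMeasure c := by
        simp_rw [lintegral_div_add_poissonMeasure, lintegral_const_mul' _ _ ENNReal.coe_ne_top]
    _ = _ := lintegral_lintegral_lintegral_rotate _

theorem bipartite_balancedness_estimate_general
    (b xe : ℝ) (hx0 : 0 ≤ xe) (hxb : xe ≤ b) :
    (∑' n : ℕ, ∑' j : ℕ, ∑' k : ℕ,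
        ((n : ℝ) / ((n : ℝ) + (max j k : ℝ))) *
          (poissonProb xe n * poissonProb (b - xe) j * poissonProb (b - xe) k)) ≥
      xe * ∑' j : ℕ, ∑' k : ℕ,
        (1 / (1 + (max j k : ℝ))) * (poissonProb b j * poissonProb b k) := by
  lift xe to ℝ≥0 using hx0 with x
  obtain ⟨c, rfl⟩ : ∃ c : ℝ≥0, b = x + c :=
    ⟨(b - x).toNNReal, by rw [Real.coe_toNNReal _ (sub_nonneg.2 hxb)]; ring⟩
  rw [add_sub_cancel_left, ← NNReal.coe_add]
  simp only [← Nat.cast_max]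
  have hw₀ (n m : ℕ) : (0 : ℝ) ≤ n / (n + m) := by positivity
  have hw₁ (n m : ℕ) : (n : ℝ) / (n + m) ≤ 1 := div_le_one_of_le₀ (by simp) (by positivity)
  have hv₀ (m : ℕ) : (0 : ℝ) ≤ 1 / (1 + m) := by positivity
  have hv₁ (m : ℕ) : 1 / (1 + m : ℝ) ≤ 1 := div_le_one_of_le₀ (by simp) (by positivity)
  have hL_ne_top : ∫⁻ n, ∫⁻ j, ∫⁻ k, ENNReal.ofReal (n / (n + (max j k : ℕ)))
      ∂poissonMeasure c ∂poissonMeasure c ∂poissonMeasure x ≠ ∞ :=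
    ne_top_of_le_ne_top ENNReal.one_ne_top <| lintegral_le_const <| .of_forall fun n =>
      lintegral_le_const <| .of_forall fun j => lintegral_le_const <| .of_forall fun k =>
        ENNReal.ofReal_le_one.2 (hw₁ _ _)
  rw [ge_iff_le,
    ← toReal_lintegral_lintegral_poissonMeasure _ _ (fun _ _ => hv₀ _) (fun _ _ => hv₁ _),
    ← toReal_lintegral_lintegral_lintegral_poissonMeasure _ _ _ (fun _ _ _ => hw₀ _ _)
      (fun _ _ _ => hw₁ _ _), ← ENNReal.coe_toReal, ← ENNReal.toReal_mul]
  exact ENNReal.toReal_mono hL_ne_top (mul_lintegral_one_div_one_add_max_le x c)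

/-- For `b ∈ [0,1]`, `x_e ∈ [0,b]` and mutually independent `P₀ ~ Pois(x_e)`,
`P₁, P₂ ~ Pois(b-x_e)`, we have
`E[P₀/(P₀+max(P₁,P₂))] ≥ x_e · E[1/(1+max(Q₁,Q₂))]` where `Q₁, Q₂` are independent
`Pois(b)` random variables (the ratio being `0` when `P₀ = 0`). -/
theorem bipartite_balancedness_estimate
    (b xe : ℝ) (hb0 : 0 ≤ b) (hb1 : b ≤ 1) (hx0 : 0 ≤ xe) (hxb : xe ≤ b) :
    (∑' n : ℕ, ∑' j : ℕ, ∑' k : ℕ,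
        ((n : ℝ) / ((n : ℝ) + (max j k : ℝ))) *
          (poissonProb xe n * poissonProb (b - xe) j * poissonProb (b - xe) k)) ≥
      xe * ∑' j : ℕ, ∑' k : ℕ,
        (1 / (1 + (max j k : ℝ))) * (poissonProb b j * poissonProb b k) :=
  bipartite_balancedness_estimate_general b xe hx0 hxb
end
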